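/- Let T > 0, let m : ℝ → ℝ be bounded, uniformly continuous and non-negative, let ψ be a Friedrichs mollifier on ℝ, and set m_ε := m * ψ_ε for ε ∈ (0, 1]. Let u be a classical solution on [0, T] of the wave equation with potential m and source f = 0 with sup_{s ∈ [0, T]} ‖u(s, ·)‖_{L²(ℝ)} < ∞, and for each ε ∈ (0, 1] let u_ε be a classical solution on [0, T] of the wave equation with potential m_ε and source f = 0, with u_ε(0, ·) = u(0, ·) and ∂_t u_ε(0, ·) = ∂_t u(0, ·). Then sup_{t ∈ [0, T]} ‖u_ε(t, ·) − u(t, ·)‖_{L²(ℝ)} → 0 as ε → 0⁺. -/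

import Mathlib

open MeasureTheory

/-- A classical solution on `[0,T]` of the wave equation with potential `m`
and source `f`: a `C²` function `u : ℝ × ℝ → ℝ` vanishing for `|x| ≥ R`
(for some `R > 0`) when `t ∈ [0,T]`, satisfying
`∂_t² u = ∂_x² u − m(x) u + f(t,x)` on `[0,T] × ℝ`. -/
def IsClassicalSolution (T : ℝ) (m : ℝ → ℝ) (f : ℝ → ℝ → ℝ) (u : ℝ → ℝ → ℝ) : Prop :=
  ContDiff ℝ 2 (fun p : ℝ × ℝ => u p.1 p.2) ∧
  (∃ R > (0 : ℝ), ∀ t ∈ Set.Icc (0 : ℝ) T, ∀ x : ℝ, R ≤ |x| → u t x = 0) ∧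
  ∀ t ∈ Set.Icc (0 : ℝ) T, ∀ x : ℝ,
    iteratedDeriv 2 (fun τ => u τ x) t =
      iteratedDeriv 2 (fun y => u t y) x - m x * u t x + f t x

/-- A Friedrichs mollifier on `ℝ`: `ψ ∈ C_c^∞(ℝ)`, `ψ ≥ 0`, `∫ ψ = 1`. -/
def IsFriedrichsMollifier (ψ : ℝ → ℝ) : Prop :=
  ContDiff ℝ (⊤ : ℕ∞) ψ ∧ HasCompactSupport ψ ∧ (∀ x, 0 ≤ ψ x) ∧ (∫ x, ψ x) = 1

/-! The difference `w = u_ε - u` solves the wave equation with potential `m_ε`, source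
`(m - m_ε) u` and zero Cauchy data. On an interval `[-R, R]` beyond the supports, its energy
`E = ∫ w² + (∂ₜw)² + (∂ₓw)²` satisfies `E' ≤ (2 + ‖m_ε‖∞) E + ‖(m - m_ε) u‖²_{L²}`: the term
`∂ₜw ∂ₓ²w + ∂ₓw ∂ₜ∂ₓw = ∂ₓ(∂ₜw ∂ₓw)` integrates to zero since `∂ₓw(±R) = 0`. Grönwall then bounds
`‖w(t)‖²` by `C(T, ‖m‖∞) ‖m - m_ε‖∞² sup_s ‖u(s)‖²`, using `‖m_ε‖∞ ≤ ‖m‖∞`; finally `m_ε → m`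
uniformly because `m` is uniformly continuous. -/

open Set Filter Topology Function

noncomputable section

section PartialDeriv

variable {E F : Type*} [NormedAddCommGroup E] [NormedSpace ℝ E]
  [NormedAddCommGroup F] [NormedSpace ℝ F]

def partialDeriv (v : E) (V : E → F) (p : E) : F := fderiv ℝ V p v

theorem ContDiff.contDiff_partialDeriv {V : E → F} {m n : WithTop ℕ∞} (hV : ContDiff ℝ n V)
    (hmn : m + 1 ≤ n) (v : E) : ContDiff ℝ m (partialDeriv v V) :=
  (hV.fderiv_right hmn).clm_apply contDiff_const

theorem ContDiff.continuous_partialDeriv {V : E → F} (hV : ContDiff ℝ 1 V) (v : E) :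
    Continuous (partialDeriv v V) :=
  (hV.contDiff_partialDeriv (m := 0) le_rfl v).continuous

theorem partialDeriv_comm {V : E → F} (hV : ContDiff ℝ 2 V) (v w : E) :
    partialDeriv v (partialDeriv w V) = partialDeriv w (partialDeriv v V) := by
  funext p
  have hV' : DifferentiableAt ℝ (fderiv ℝ V) p :=
    (hV.fderiv_right (m := 1) le_rfl).differentiable one_ne_zero p
  have hclm (u : E) : fderiv ℝ (partialDeriv u V) p = (fderiv ℝ (fderiv ℝ V) p).flip u :=
    fderiv_clm_apply hV' (differentiableAt_const u) |>.trans (by ext; simp)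
  simp only [partialDeriv, hclm]
  exact hV.contDiffAt.isSymmSndFDerivAt (by simp) v w

end PartialDeriv

local notation "∂ₜ" => partialDeriv ((1 : ℝ), (0 : ℝ))
local notation "∂ₓ" => partialDeriv ((0 : ℝ), (1 : ℝ))

section Slices

variable {F : Type*} [NormedAddCommGroup F] [NormedSpace ℝ F] {V : ℝ × ℝ → F}

theorem hasDerivAt_fst_slice {t x : ℝ} (hV : DifferentiableAt ℝ V (t, x)) :
    HasDerivAt (fun τ => V (τ, x)) (∂ₜ V (t, x)) t :=
  hV.hasFDerivAt.comp_hasDerivAt t ((hasDerivAt_id t).prodMk (hasDerivAt_const t x))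

theorem hasDerivAt_snd_slice {t x : ℝ} (hV : DifferentiableAt ℝ V (t, x)) :
    HasDerivAt (fun y => V (t, y)) (∂ₓ V (t, x)) x :=
  hV.hasFDerivAt.comp_hasDerivAt x ((hasDerivAt_const x t).prodMk (hasDerivAt_id x))

theorem iteratedDeriv_two_fst_slice (hV : ContDiff ℝ 2 V) (t x : ℝ) :
    iteratedDeriv 2 (fun τ => V (τ, x)) t = ∂ₜ (∂ₜ V) (t, x) := by
  have hderiv : deriv (fun τ => V (τ, x)) = fun τ => ∂ₜ V (τ, x) :=
    funext fun τ => (hasDerivAt_fst_slice (hV.differentiable two_ne_zero _)).deriv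
  rw [iteratedDeriv_succ, iteratedDeriv_one, hderiv]
  exact (hasDerivAt_fst_slice ((hV.contDiff_partialDeriv (m := 1) le_rfl _).differentiable
    one_ne_zero _)).deriv

theorem iteratedDeriv_two_snd_slice (hV : ContDiff ℝ 2 V) (t x : ℝ) :
    iteratedDeriv 2 (fun y => V (t, y)) x = ∂ₓ (∂ₓ V) (t, x) := by
  have hderiv : deriv (fun y => V (t, y)) = fun y => ∂ₓ V (t, y) :=
    funext fun y => (hasDerivAt_snd_slice (hV.differentiable two_ne_zero _)).deriv
  rw [iteratedDeriv_succ, iteratedDeriv_one, hderiv]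
  exact (hasDerivAt_snd_slice ((hV.contDiff_partialDeriv (m := 1) le_rfl _).differentiable
    one_ne_zero _)).deriv

theorem partialDeriv_snd_eq_zero_of_forall_abs_ge {R t x : ℝ}
    (hV : DifferentiableAt ℝ V (t, x)) (hzero : ∀ y, R ≤ |y| → V (t, y) = 0) (hx : R < |x|) :
    ∂ₓ V (t, x) = 0 := by
  have hloc : (fun y => V (t, y)) =ᶠ[𝓝 x] fun _ => 0 :=
    eventually_of_mem ((isOpen_lt continuous_const continuous_abs).mem_nhds hx)
      fun y hy => hzero y hy.le
  rw [← (hasDerivAt_snd_slice hV).deriv, hloc.deriv_eq, deriv_const]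

end Slices

theorem hasDerivAt_intervalIntegral_of_continuous_deriv {E : Type*} [NormedAddCommGroup E]
    [NormedSpace ℝ E] {F F' : ℝ × ℝ → E} (hF : Continuous F) (hF' : Continuous F')
    (hderiv : ∀ t x, HasDerivAt (fun τ => F (τ, x)) (F' (t, x)) t) (a b t₀ : ℝ) :
    HasDerivAt (fun t => ∫ x in a..b, F (t, x)) (∫ x in a..b, F' (t₀, x)) t₀ := by
  obtain ⟨C, hC⟩ := ((isCompact_closedBall t₀ 1).prod (isCompact_uIcc (a := a) (b := b))
    ).exists_bound_of_continuousOn hF'.continuousOn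
  refine (intervalIntegral.hasDerivAt_integral_of_dominated_loc_of_deriv_le
    (bound := fun _ => C) (Metric.ball_mem_nhds t₀ one_pos)
    (Eventually.of_forall fun t => (hF.comp (Continuous.prodMk_right t)).aestronglyMeasurable)
    ((hF.comp (Continuous.prodMk_right t₀)).intervalIntegrable a b)
    (hF'.comp (Continuous.prodMk_right t₀)).aestronglyMeasurable
    (Eventually.of_forall fun x hx t ht =>
      hC (t, x) ⟨Metric.ball_subset_closedBall ht, uIoc_subset_uIcc hx⟩)
    intervalIntegrable_const (Eventually.of_forall fun x _ t _ => hderiv t x)).2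

theorem integral_eq_intervalIntegral_of_forall_abs_ge {E : Type*} [NormedAddCommGroup E]
    [NormedSpace ℝ E] {f : ℝ → E} {R : ℝ} (hf : ∀ x, R ≤ |x| → f x = 0) :
    ∫ x, f x = ∫ x in -R..R, f x := by
  refine (intervalIntegral.integral_eq_integral_of_support_subset fun x hx => ?_).symm
  have hx' := abs_lt.1 (not_le.1 (mt (hf x) hx))
  exact ⟨hx'.1, hx'.2.le⟩

section Energy

variable {W : ℝ × ℝ → ℝ}

def waveEnergy (W : ℝ × ℝ → ℝ) (R t : ℝ) : ℝ :=
  ∫ x in -R..R, W (t, x) ^ 2 + ∂ₜ W (t, x) ^ 2 + ∂ₓ W (t, x) ^ 2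

theorem waveEnergy_eq_zero (hW : Differentiable ℝ W) {R t : ℝ} (h : ∀ x, W (t, x) = 0)
    (ht : ∀ x, ∂ₜ W (t, x) = 0) : waveEnergy W R t = 0 := by
  have hx (x : ℝ) : ∂ₓ W (t, x) = 0 := by
    rw [← (hasDerivAt_snd_slice (hW _)).deriv, funext h, deriv_const]
  simp [waveEnergy, h, ht, hx]

theorem intervalIntegral_sq_le_waveEnergy (hW : ContDiff ℝ 1 W) {R : ℝ} (hR : 0 ≤ R) (t : ℝ) :
    ∫ x in -R..R, W (t, x) ^ 2 ≤ waveEnergy W R t := by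
  have hc := hW.continuous
  have hc₁ (v : ℝ × ℝ) := hW.continuous_partialDeriv v
  refine intervalIntegral.integral_mono_on (by linarith)
    (Continuous.intervalIntegrable (by fun_prop) _ _)
    (Continuous.intervalIntegrable (by fun_prop) _ _) fun x _ => ?_
  nlinarith [sq_nonneg (∂ₜ W (t, x)), sq_nonneg (∂ₓ W (t, x))]

theorem hasDerivAt_waveEnergy (hW : ContDiff ℝ 2 W) (R t : ℝ) :
    HasDerivAt (waveEnergy W R) (∫ x in -R..R, 2 * (W (t, x) * ∂ₜ W (t, x) +
      ∂ₜ W (t, x) * ∂ₜ (∂ₜ W) (t, x) + ∂ₓ W (t, x) * ∂ₜ (∂ₓ W) (t, x))) t := by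
  have hW₁ (v : ℝ × ℝ) : ContDiff ℝ 1 (partialDeriv v W) := hW.contDiff_partialDeriv le_rfl v
  have hc := hW.continuous
  have hc₁ (v : ℝ × ℝ) := (hW₁ v).continuous
  have hc₂ (v w : ℝ × ℝ) := (hW₁ w).continuous_partialDeriv v
  have hd {V : ℝ × ℝ → ℝ} (hV : ContDiff ℝ 1 V) (s x : ℝ) :=
    hasDerivAt_fst_slice (hV.differentiable one_ne_zero (s, x))
  refine hasDerivAt_intervalIntegral_of_continuous_deriv
    (F := fun p => W p ^ 2 + ∂ₜ W p ^ 2 + ∂ₓ W p ^ 2)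
    (F' := fun p => 2 * (W p * ∂ₜ W p + ∂ₜ W p * ∂ₜ (∂ₜ W) p + ∂ₓ W p * ∂ₜ (∂ₓ W) p))
    (by fun_prop) (by fun_prop) (fun s x => ?_) (-R) R t
  exact ((((hd (hW.of_le one_le_two) s x).fun_pow 2).add ((hd (hW₁ _) s x).fun_pow 2)).add
    ((hd (hW₁ _) s x).fun_pow 2)).congr_deriv (by push_cast; ring)

theorem intervalIntegral_energyFlux_eq_zero (hW : ContDiff ℝ 2 W) {R t : ℝ}
    (hleft : ∂ₓ W (t, -R) = 0) (hright : ∂ₓ W (t, R) = 0) :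
    ∫ x in -R..R, (∂ₜ W (t, x) * ∂ₓ (∂ₓ W) (t, x) + ∂ₓ W (t, x) * ∂ₜ (∂ₓ W) (t, x)) = 0 := by
  have hW₁ (v : ℝ × ℝ) : ContDiff ℝ 1 (partialDeriv v W) := hW.contDiff_partialDeriv le_rfl v
  have hc₁ (v : ℝ × ℝ) := (hW₁ v).continuous
  have hc₂ (v w : ℝ × ℝ) := (hW₁ w).continuous_partialDeriv v
  have hd (x : ℝ) : HasDerivAt (fun y => ∂ₜ W (t, y) * ∂ₓ W (t, y))
      (∂ₜ W (t, x) * ∂ₓ (∂ₓ W) (t, x) + ∂ₓ W (t, x) * ∂ₜ (∂ₓ W) (t, x)) x := by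
    have h := (hasDerivAt_snd_slice ((hW₁ (1, 0)).differentiable one_ne_zero (t, x))).mul
      (hasDerivAt_snd_slice ((hW₁ (0, 1)).differentiable one_ne_zero (t, x)))
    rw [partialDeriv_comm hW] at h
    exact h.congr_deriv (by ring)
  rw [intervalIntegral.integral_eq_sub_of_hasDerivAt (fun x _ => hd x)
    (Continuous.intervalIntegrable (by fun_prop) _ _), hleft, hright, mul_zero, mul_zero, sub_zero]

theorem two_mul_energyRate_le {w a b c d q g M : ℝ} (hq : |q| ≤ M) :
    2 * (w * a + a * (c - q * w + g) + b * d) ≤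
      (2 + M) * (w ^ 2 + a ^ 2 + b ^ 2) + g ^ 2 + 2 * (a * c + b * d) := by
  have hM : 0 ≤ M := (abs_nonneg q).trans hq
  have hqwa : -(q * (w * a)) ≤ M * |w * a| :=
    (neg_le_abs _).trans (by rw [abs_mul]; gcongr)
  nlinarith [two_mul_le_add_sq |w| |a|, two_mul_le_add_sq w a, two_mul_le_add_sq a g,
    sq_nonneg b, abs_mul w a, sq_abs w, sq_abs a]

theorem deriv_waveEnergy_le (hW : ContDiff ℝ 2 W) {q g : ℝ → ℝ} {M : ℝ}
    (hq : ∀ x, |q x| ≤ M) (hg : Continuous g) {R t : ℝ} (hR : 0 ≤ R)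
    (hpde : ∀ x, ∂ₜ (∂ₜ W) (t, x) = ∂ₓ (∂ₓ W) (t, x) - q x * W (t, x) + g x)
    (hleft : ∂ₓ W (t, -R) = 0) (hright : ∂ₓ W (t, R) = 0) :
    deriv (waveEnergy W R) t ≤ (2 + M) * waveEnergy W R t + ∫ x in -R..R, g x ^ 2 := by
  have hW₁ (v : ℝ × ℝ) : ContDiff ℝ 1 (partialDeriv v W) := hW.contDiff_partialDeriv le_rfl v
  have hc := hW.continuous
  have hc₁ (v : ℝ × ℝ) := (hW₁ v).continuous
  have hc₂ (v w : ℝ × ℝ) := (hW₁ w).continuous_partialDeriv v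
  have hint {f : ℝ → ℝ} (hf : Continuous f) : IntervalIntegrable f volume (-R) R :=
    hf.intervalIntegrable _ _
  rw [(hasDerivAt_waveEnergy hW R t).deriv]
  calc _ ≤ ∫ x in -R..R, ((2 + M) * (W (t, x) ^ 2 + ∂ₜ W (t, x) ^ 2 + ∂ₓ W (t, x) ^ 2) +
        g x ^ 2 + 2 * (∂ₜ W (t, x) * ∂ₓ (∂ₓ W) (t, x) + ∂ₓ W (t, x) * ∂ₜ (∂ₓ W) (t, x))) :=
        intervalIntegral.integral_mono_on (by linarith) (hint (by fun_prop))
          (hint (by fun_prop)) fun x _ => by rw [hpde x]; exact two_mul_energyRate_le (hq x)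
    _ = (2 + M) * waveEnergy W R t + ∫ x in -R..R, g x ^ 2 := by
        rw [intervalIntegral.integral_add (hint (by fun_prop)) (hint (by fun_prop)),
          intervalIntegral.integral_add (hint (by fun_prop)) (hint (by fun_prop)),
          intervalIntegral.integral_const_mul, intervalIntegral.integral_const_mul,
          intervalIntegral_energyFlux_eq_zero hW hleft hright, mul_zero, add_zero, waveEnergy]

theorem waveEnergy_le_gronwallBound (hW : ContDiff ℝ 2 W) {q : ℝ → ℝ} {g : ℝ → ℝ → ℝ}
    {M B R T : ℝ} (hq : ∀ x, |q x| ≤ M) (hg : Continuous (uncurry g)) (hR : 0 ≤ R)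
    (hpde : ∀ t ∈ Ico 0 T, ∀ x, ∂ₜ (∂ₜ W) (t, x) = ∂ₓ (∂ₓ W) (t, x) - q x * W (t, x) + g t x)
    (hbdry : ∀ t ∈ Ico 0 T, ∂ₓ W (t, -R) = 0 ∧ ∂ₓ W (t, R) = 0)
    (hB : ∀ t ∈ Ico 0 T, ∫ x in -R..R, g t x ^ 2 ≤ B) (t : ℝ) (ht : t ∈ Icc 0 T) :
    waveEnergy W R t ≤ gronwallBound (waveEnergy W R 0) (2 + M) B t := by
  have hE (s : ℝ) := hasDerivAt_waveEnergy hW R s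
  simpa using le_gronwallBound_of_liminf_deriv_right_le
    (fun s _ => (hE s).continuousAt.continuousWithinAt)
    (fun s _ r hr =>
      (hE s).differentiableAt.hasDerivAt.hasDerivWithinAt.liminf_right_slope_le hr)
    le_rfl (fun s hs => (deriv_waveEnergy_le (g := g s) hW hq (hg.comp (.prodMk_right s)) hR
      (hpde s hs) (hbdry s hs).1 (hbdry s hs).2).trans (by linarith [hB s hs])) t ht

end Energy

theorem sq_mul_le_of_abs_le {a η : ℝ} (ha : |a| ≤ η) (b : ℝ) : (a * b) ^ 2 ≤ η ^ 2 * b ^ 2 := by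
  rw [mul_pow, ← sq_abs a]
  exact mul_le_mul_of_nonneg_right (pow_le_pow_left₀ (abs_nonneg a) ha 2) (sq_nonneg b)

section SquareIntegral

variable {α : Type*} [MeasurableSpace α] {μ : Measure α} {a f : α → ℝ} {η : ℝ}

theorem integrable_sq_mul_of_abs_le (hmeas : AEStronglyMeasurable (fun x => a x * f x) μ)
    (ha : ∀ x, |a x| ≤ η) (hf : Integrable (fun x => f x ^ 2) μ) :
    Integrable (fun x => (a x * f x) ^ 2) μ :=
  (hf.const_mul _).mono' (hmeas.pow 2) (Eventually.of_forall fun x => by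
    rw [Real.norm_eq_abs, abs_of_nonneg (sq_nonneg _)]
    exact sq_mul_le_of_abs_le (ha x) (f x))

theorem integral_sq_mul_le_of_abs_le (hmeas : AEStronglyMeasurable (fun x => a x * f x) μ)
    (ha : ∀ x, |a x| ≤ η) (hf : Integrable (fun x => f x ^ 2) μ) :
    ∫ x, (a x * f x) ^ 2 ∂μ ≤ η ^ 2 * ∫ x, f x ^ 2 ∂μ := by
  rw [← integral_const_mul]
  exact integral_mono (integrable_sq_mul_of_abs_le hmeas ha hf) (hf.const_mul _)
    fun x => sq_mul_le_of_abs_le (ha x) (f x)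

end SquareIntegral

namespace IsClassicalSolution

variable {T : ℝ} {q m : ℝ → ℝ} {f g u v w : ℝ → ℝ → ℝ}

theorem hasDerivAt_fst_slice (hu : IsClassicalSolution T q g u) (t x : ℝ) :
    HasDerivAt (fun τ => u τ x) (∂ₜ (uncurry u) (t, x)) t :=
  _root_.hasDerivAt_fst_slice (hu.1.differentiable two_ne_zero _)

theorem integrable_sq (hu : IsClassicalSolution T q g u) {t : ℝ} (ht : t ∈ Icc 0 T) :
    Integrable fun x => u t x ^ 2 := by
  obtain ⟨hu₂, ⟨R, -, hsupp⟩, -⟩ := hu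
  refine ((hu₂.continuous.comp (.prodMk_right t)).pow 2).integrable_of_hasCompactSupport
    (HasCompactSupport.intro (isCompact_Icc (a := -R) (b := R)) fun x hx => ?_)
  simp [hsupp t ht x (not_le.1 (mt abs_le.1 hx)).le]

theorem sub (hv : IsClassicalSolution T q f v) (hu : IsClassicalSolution T m g u) :
    IsClassicalSolution T q (fun t x => f t x - g t x + (m x - q x) * u t x)
      (fun t x => v t x - u t x) := by
  obtain ⟨hv₂, ⟨Rv, hRv, hv_supp⟩, hv_pde⟩ := hv
  obtain ⟨hu₂, ⟨Ru, -, hu_supp⟩, hu_pde⟩ := hu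
  refine ⟨hv₂.sub hu₂, ⟨max Rv Ru, lt_max_of_lt_left hRv, fun t ht x hx => ?_⟩,
    fun t ht x => ?_⟩
  · dsimp only
    rw [hv_supp t ht x (le_of_max_le_left hx), hu_supp t ht x (le_of_max_le_right hx), sub_self]
  · have hfst {V : ℝ × ℝ → ℝ} (hV : ContDiff ℝ 2 V) : ContDiff ℝ 2 fun τ => V (τ, x) :=
      hV.comp (contDiff_id.prodMk contDiff_const)
    have hsnd {V : ℝ × ℝ → ℝ} (hV : ContDiff ℝ 2 V) : ContDiff ℝ 2 fun y => V (t, y) :=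
      hV.comp (contDiff_const.prodMk contDiff_id)
    rw [iteratedDeriv_fun_sub (hfst hv₂).contDiffAt (hfst hu₂).contDiffAt,
      iteratedDeriv_fun_sub (hsnd hv₂).contDiffAt (hsnd hu₂).contDiffAt,
      hv_pde t ht x, hu_pde t ht x]
    ring

theorem integral_sq_le_gronwallBound (hw : IsClassicalSolution T q g w) {M B : ℝ}
    (hq : ∀ x, |q x| ≤ M) (hg : Continuous (uncurry g))
    (hg_int : ∀ t ∈ Icc 0 T, Integrable fun x => g t x ^ 2)
    (hB : ∀ t ∈ Icc 0 T, ∫ x, g t x ^ 2 ≤ B) (h₀ : ∀ x, w 0 x = 0)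
    (h₀' : ∀ x, deriv (fun τ => w τ x) 0 = 0) (t : ℝ) (ht : t ∈ Icc 0 T) :
    ∫ x, w t x ^ 2 ≤ gronwallBound 0 (2 + M) B t := by
  obtain ⟨hW, ⟨R, hR, hsupp⟩, hpde⟩ := hw
  replace hW : ContDiff ℝ 2 (uncurry w) := hW
  have hW₁ : Differentiable ℝ (uncurry w) := hW.differentiable two_ne_zero
  -- Integrating over `[-(R + 1), R + 1]` makes `∂ₓ w` vanish at the endpoints.
  have hbdry (s : ℝ) (hs : s ∈ Ico 0 T) : ∂ₓ (uncurry w) (s, -(R + 1)) = 0 ∧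
      ∂ₓ (uncurry w) (s, R + 1) = 0 := by
    have hR' : |R + 1| = R + 1 := abs_of_pos (by linarith)
    exact ⟨partialDeriv_snd_eq_zero_of_forall_abs_ge (hW₁ _) (hsupp s (Ico_subset_Icc_self hs))
        (by rw [abs_neg, hR']; linarith),
      partialDeriv_snd_eq_zero_of_forall_abs_ge (hW₁ _) (hsupp s (Ico_subset_Icc_self hs))
        (by rw [hR']; linarith)⟩
  have hB' (s : ℝ) (hs : s ∈ Ico 0 T) : ∫ x in -(R + 1)..R + 1, g s x ^ 2 ≤ B := by
    rw [intervalIntegral.integral_of_le (by linarith)]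
    exact (setIntegral_le_integral (hg_int s (Ico_subset_Icc_self hs))
      (Eventually.of_forall fun x => sq_nonneg _)).trans (hB s (Ico_subset_Icc_self hs))
  have hpde' (s : ℝ) (hs : s ∈ Ico 0 T) (x : ℝ) : ∂ₜ (∂ₜ (uncurry w)) (s, x) =
      ∂ₓ (∂ₓ (uncurry w)) (s, x) - q x * uncurry w (s, x) + g s x := by
    rw [← iteratedDeriv_two_fst_slice hW, ← iteratedDeriv_two_snd_slice hW]
    exact hpde s (Ico_subset_Icc_self hs) x
  have henergy₀ : waveEnergy (uncurry w) (R + 1) 0 = 0 :=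
    waveEnergy_eq_zero hW₁ h₀ fun x =>
      (_root_.hasDerivAt_fst_slice (hW₁ _)).deriv.symm.trans (h₀' x)
  calc ∫ x, w t x ^ 2 = ∫ x in -(R + 1)..R + 1, uncurry w (t, x) ^ 2 :=
        integral_eq_intervalIntegral_of_forall_abs_ge fun x hx => by
          simp [hsupp t ht x (by linarith)]
    _ ≤ waveEnergy (uncurry w) (R + 1) t :=
        intervalIntegral_sq_le_waveEnergy (hW.of_le one_le_two) (by linarith) t
    _ ≤ gronwallBound 0 (2 + M) B t := by
        simpa only [henergy₀] using
          waveEnergy_le_gronwallBound hW hq hg (by linarith) hpde' hbdry hB' t ht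

theorem integral_sq_sub_le (hv : IsClassicalSolution T q f v) (hu : IsClassicalSolution T m f u)
    (hq : Continuous q) (hm : Continuous m) {M η K : ℝ} (hqM : ∀ x, |q x| ≤ M)
    (hqm : ∀ x, |m x - q x| ≤ η) (hK : ∀ s ∈ Icc 0 T, ∫ x, u s x ^ 2 ≤ K)
    (h₀ : ∀ x, v 0 x = u 0 x)
    (h₀' : ∀ x, deriv (fun τ => v τ x) 0 = deriv (fun τ => u τ x) 0) (t : ℝ)
    (ht : t ∈ Icc 0 T) :
    ∫ x, (v t x - u t x) ^ 2 ≤ gronwallBound 0 (2 + M) (η ^ 2 * K) t := by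
  have hw : IsClassicalSolution T q (fun t x => (m x - q x) * u t x)
      (fun t x => v t x - u t x) := by
    simpa only [sub_self, zero_add] using hv.sub hu
  have hu_cont : Continuous (uncurry u) := hu.1.continuous
  have hmeas (s : ℝ) : AEStronglyMeasurable (fun x => (m x - q x) * u s x) :=
    Continuous.aestronglyMeasurable (by fun_prop)
  refine hw.integral_sq_le_gronwallBound hqM (by fun_prop)
    (fun s hs => integrable_sq_mul_of_abs_le (hmeas s) hqm (hu.integrable_sq hs))
    (fun s hs => (integral_sq_mul_le_of_abs_le (hmeas s) hqm (hu.integrable_sq hs)).trans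
      (by gcongr; exact hK s hs))
    (fun x => sub_eq_zero.2 (h₀ x)) (fun x => ?_) t ht
  rw [((hv.hasDerivAt_fst_slice 0 x).fun_sub (hu.hasDerivAt_fst_slice 0 x)).deriv,
    ← (hv.hasDerivAt_fst_slice 0 x).deriv, ← (hu.hasDerivAt_fst_slice 0 x).deriv, h₀' x,
    sub_self]

end IsClassicalSolution

def mollify (ψ : ℝ → ℝ) (ε : ℝ) (m : ℝ → ℝ) (x : ℝ) : ℝ :=
  ∫ y, m (x - y) * (ε⁻¹ * ψ (y / ε))

open scoped Convolution in
theorem mollify_eq_convolution (ψ : ℝ → ℝ) (ε : ℝ) (m : ℝ → ℝ) :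
    mollify ψ ε m = (fun y => ε⁻¹ * ψ (y / ε)) ⋆[ContinuousLinearMap.lsmul ℝ ℝ] m := by
  ext x
  simp [mollify, convolution_lsmul, mul_comm]

theorem support_rescale_subset_ball {ψ : ℝ → ℝ} {ε r : ℝ} (hε : 0 < ε)
    (hr : support ψ ⊆ Metric.ball 0 r) :
    support (fun y => ε⁻¹ * ψ (y / ε)) ⊆ Metric.ball 0 (ε * r) := by
  intro y hy
  have hy' := hr (right_ne_zero_of_mul hy)
  rw [mem_ball_zero_iff, Real.norm_eq_abs, abs_div, abs_of_pos hε, div_lt_iff₀ hε] at hy'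
  rwa [mem_ball_zero_iff, Real.norm_eq_abs, mul_comm]

namespace IsFriedrichsMollifier

variable {ψ m : ℝ → ℝ} {ε r : ℝ}

theorem exists_support_subset_ball (hψ : IsFriedrichsMollifier ψ) :
    ∃ r > 0, support ψ ⊆ Metric.ball 0 r := by
  obtain ⟨r, hr, hsub⟩ := hψ.2.1.isCompact.isBounded.subset_ball_lt 0 0
  exact ⟨r, hr, (subset_tsupport ψ).trans hsub⟩

theorem integral_rescale (hψ : IsFriedrichsMollifier ψ) (hε : 0 < ε) :
    ∫ y, ε⁻¹ * ψ (y / ε) = 1 := by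
  rw [integral_const_mul, Measure.integral_comp_div (fun y => ψ y), hψ.2.2.2, abs_of_pos hε,
    smul_eq_mul, mul_one, inv_mul_cancel₀ hε.ne']

theorem dist_mollify_le (hψ : IsFriedrichsMollifier ψ) (hε : 0 < ε)
    (hr : support ψ ⊆ Metric.ball 0 r) (hm : AEStronglyMeasurable m) {x z η : ℝ}
    (hη : 0 ≤ η) (h : ∀ y ∈ Metric.ball x (ε * r), dist (m y) z ≤ η) :
    dist (mollify ψ ε m x) z ≤ η := by
  rw [mollify_eq_convolution]
  exact dist_convolution_le hη (support_rescale_subset_ball hε hr)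
    (fun y => mul_nonneg (inv_nonneg.2 hε.le) (hψ.2.2.1 _)) (hψ.integral_rescale hε) hm h

theorem abs_mollify_le (hψ : IsFriedrichsMollifier ψ) (hε : 0 < ε) (hm : Continuous m) {M : ℝ}
    (hM : ∀ x, |m x| ≤ M) (x : ℝ) : |mollify ψ ε m x| ≤ M := by
  obtain ⟨r, -, hr⟩ := hψ.exists_support_subset_ball
  simpa using hψ.dist_mollify_le hε hr hm.aestronglyMeasurable (z := 0) (x := x)
    ((abs_nonneg _).trans (hM 0)) fun y _ => by simpa using hM y

theorem exists_abs_mollify_sub_le (hψ : IsFriedrichsMollifier ψ) (hm : UniformContinuous m)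
    {η : ℝ} (hη : 0 < η) : ∃ ε₀ > 0, ∀ ε ∈ Ioc 0 ε₀, ∀ x, |mollify ψ ε m x - m x| ≤ η := by
  obtain ⟨r, hr₀, hr⟩ := hψ.exists_support_subset_ball
  obtain ⟨d, hd, hmd⟩ := Metric.uniformContinuous_iff.1 hm η hη
  refine ⟨d / r, div_pos hd hr₀, fun ε hε x => ?_⟩
  rw [← Real.dist_eq]
  exact hψ.dist_mollify_le hε.1 hr hm.continuous.aestronglyMeasurable hη.le
    fun y hy => (hmd (hy.trans_le ((le_div_iff₀ hr₀).1 hε.2))).le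

theorem continuous_mollify (hψ : IsFriedrichsMollifier ψ) (hε : 0 < ε) (hm : Continuous m) :
    Continuous (mollify ψ ε m) := by
  obtain ⟨r, -, hr⟩ := hψ.exists_support_subset_ball
  have hψc : Continuous ψ := hψ.1.continuous
  rw [mollify_eq_convolution]
  exact HasCompactSupport.continuous_convolution_left _
    ((isCompact_closedBall 0 (ε * r)).of_isClosed_subset (isClosed_tsupport _)
      (closure_minimal ((support_rescale_subset_ball hε hr).trans Metric.ball_subset_closedBall)
        Metric.isClosed_closedBall))
    (by fun_prop) hm.locallyIntegrable

end IsFriedrichsMollifier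

theorem exists_pos_gronwallBound_sq_mul_lt (K C x : ℝ) {ε : ℝ} (hε : 0 < ε) :
    ∃ η > 0, gronwallBound 0 K (η ^ 2 * C) x < ε := by
  have hcont : Continuous fun η => gronwallBound 0 K (η ^ 2 * C) x :=
    (gronwallBound_continuous_ε 0 K x).comp (by fun_prop)
  have h₀ : gronwallBound 0 K (0 ^ 2 * C) x < ε := by simpa [gronwallBound_ε0_δ0] using hε
  obtain ⟨η, hη, hη₀⟩ := (((hcont.tendsto 0).eventually (gt_mem_nhds h₀)).filter_mono
    nhdsWithin_le_nhds |>.and self_mem_nhdsWithin).exists (f := 𝓝[>] 0)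
  exact ⟨η, hη₀, hη⟩

end

theorem very_weak_solution_consistency_general
    (T : ℝ) (m : ℝ → ℝ)
    (hmb : ∃ M, ∀ x, |m x| ≤ M) (hmu : UniformContinuous m)
    (ψ : ℝ → ℝ) (hψ : IsFriedrichsMollifier ψ)
    (u : ℝ → ℝ → ℝ) (hu : IsClassicalSolution T m (fun _ _ => 0) u)
    (hubd : ∃ K, ∀ s ∈ Set.Icc (0 : ℝ) T, Real.sqrt (∫ x : ℝ, (u s x) ^ 2) ≤ K)
    (uε : ℝ → ℝ → ℝ → ℝ)
    (huε : ∀ ε ∈ Set.Ioc (0 : ℝ) 1,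
      IsClassicalSolution T (fun x => ∫ y : ℝ, m (x - y) * (ε⁻¹ * ψ (y / ε)))
        (fun _ _ => 0) (uε ε))
    (hdata : ∀ ε ∈ Set.Ioc (0 : ℝ) 1, ∀ x : ℝ,
      uε ε 0 x = u 0 x ∧
      deriv (fun τ => uε ε τ x) 0 = deriv (fun τ => u τ x) 0) :
    ∀ δ > (0 : ℝ), ∃ ε₀ > (0 : ℝ), ∀ ε : ℝ, 0 < ε → ε ≤ ε₀ → ε ≤ 1 →
      ∀ t ∈ Set.Icc (0 : ℝ) T,
        Real.sqrt (∫ x : ℝ, (uε ε t x - u t x) ^ 2) ≤ δ := by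
  intro δ hδ
  obtain ⟨M, hM⟩ := hmb
  obtain ⟨K, hK⟩ := hubd
  have hM₀ : 0 ≤ M := (abs_nonneg _).trans (hM 0)
  obtain ⟨η, hη, hηδ⟩ := exists_pos_gronwallBound_sq_mul_lt (2 + M) (K ^ 2) T (pow_pos hδ 2)
  obtain ⟨ε₀, hε₀, hmol⟩ := hψ.exists_abs_mollify_sub_le hmu hη
  refine ⟨ε₀, hε₀, fun ε hε hεε₀ hε₁ t ht => ?_⟩
  have huε' : IsClassicalSolution T (mollify ψ ε m) _ _ := huε ε ⟨hε, hε₁⟩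
  have hbound := huε'.integral_sq_sub_le hu (hψ.continuous_mollify hε hmu.continuous)
    hmu.continuous (hψ.abs_mollify_le hε hmu.continuous hM)
    (fun x => by rw [abs_sub_comm]; exact hmol ε ⟨hε, hεε₀⟩ x)
    (fun s hs => (Real.sqrt_le_iff.1 (hK s hs)).2) (fun x => (hdata ε ⟨hε, hε₁⟩ x).1)
    (fun x => (hdata ε ⟨hε, hε₁⟩ x).2) t ht
  rw [Real.sqrt_le_left hδ.le]
  exact hbound.trans ((gronwallBound_mono le_rfl (by positivity) (by linarith) ht.2).trans hηδ.le)

/-- Consistency of very weak solutions with classical ones (case `α = 1`,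
`d = 1`): if `m` is bounded, uniformly continuous and non-negative,
`m_ε = m * ψ_ε`, `u` is a classical solution with potential `m` and `u_ε`
classical solutions with potentials `m_ε`, all with the same Cauchy data, then
`sup_{t∈[0,T]} ‖u_ε(t,·) − u(t,·)‖_{L²} → 0` as `ε → 0⁺`. -/
theorem very_weak_solution_consistency
    (T : ℝ) (hT : 0 < T) (m : ℝ → ℝ)
    (hmb : ∃ M, ∀ x, |m x| ≤ M) (hmu : UniformContinuous m) (hm : ∀ x, 0 ≤ m x)
    (ψ : ℝ → ℝ) (hψ : IsFriedrichsMollifier ψ)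
    (u : ℝ → ℝ → ℝ) (hu : IsClassicalSolution T m (fun _ _ => 0) u)
    (hubd : ∃ K, ∀ s ∈ Set.Icc (0 : ℝ) T, Real.sqrt (∫ x : ℝ, (u s x) ^ 2) ≤ K)
    (uε : ℝ → ℝ → ℝ → ℝ)
    (huε : ∀ ε ∈ Set.Ioc (0 : ℝ) 1,
      IsClassicalSolution T (fun x => ∫ y : ℝ, m (x - y) * (ε⁻¹ * ψ (y / ε)))
        (fun _ _ => 0) (uε ε))
    (hdata : ∀ ε ∈ Set.Ioc (0 : ℝ) 1, ∀ x : ℝ,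
      uε ε 0 x = u 0 x ∧
      deriv (fun τ => uε ε τ x) 0 = deriv (fun τ => u τ x) 0) :
    ∀ δ > (0 : ℝ), ∃ ε₀ > (0 : ℝ), ∀ ε : ℝ, 0 < ε → ε ≤ ε₀ → ε ≤ 1 →
      ∀ t ∈ Set.Icc (0 : ℝ) T,
        Real.sqrt (∫ x : ℝ, (uε ε t x - u t x) ^ 2) ≤ δ :=
  very_weak_solution_consistency_general T m hmb hmu ψ hψ u hu hubd uε huε hdata
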